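/- Consider the discrete-time affine state dynamics x(k+1) = A x(k) + B̂ û(k) + L̄ with A ∈ ℝ^{n×n}, B̂ ∈ ℝ^{n×q}, L̄ ∈ ℝ^n, and assume (A, B̂) is controllable. Let û^d : {0,…,T−1} → ℝ^q and x^d : {0,…,T} → ℝ^n satisfy x^d(k+1) = A x^d(k) + B̂ û^d(k) + L̄ for all 0 ≤ k ≤ T−1, and let L ≥ 1 with L ≤ T. If û^d is Hankel exciting of order L + n + 1, then the ((qL + n + 1) × (T−L+1)) matrix obtained by vertically stacking 𝓗_L(û^d), the matrix X_d = [x^d(0), x^d(1), …, x^d(T−L)] ∈ ℝ^{n×(T−L+1)}, and the all-ones row vector of length T−L+1, has full row rank qL + n + 1. -/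

import Mathlib

/-!
Homogenizing the affine dynamics with the state `z = (x, 1)` gives the linear system
`z (k + 1) = Ā z k + B̄ u k` with `Ā = [[A, L̄], [0, 1]]` and `B̄ = [B̂; 0]`, and the stacked matrix
becomes `[𝓗_L(u); Z]`. The pair `(Ā, B̄)` is not controllable, but the argument only needs the
Markov parameters `ζ Āᵏ B̄` of a left-kernel vector `(η, ζ)` to vanish.

Pushing the relation `η 𝓗_L(u) + ζ Z = 0` forward `s` steps along the dynamics gives a relation
between `𝓗_{L+N}(u)` (`N = n + 1`) and `ζ Āˢ Z`, with Hankel coefficients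
`(ζ Āˢ⁻¹ B̄, …, ζ B̄, η)`. Combining these relations for `s = 0, …, N` with the coefficients of the
characteristic polynomial of `Ā` cancels the state term (Cayley–Hamilton), so Hankel excitation
of order `L + N` makes the combined coefficient sequence zero. As the characteristic polynomial
is monic, a backward recursion then kills the whole sequence `(ζ Āᴺ⁻¹ B̄, …, ζ B̄, η)`. Writing
`ζ = (ξ, c)`, this gives `η = 0` and `ξ Aᵏ B̂ = 0` for `k < n`, hence `ξ = 0` by controllability,
and finally `c = 0` from the row of ones.
-/

open Matrix

/-- The block Hankel matrix of depth `k` of a signal `ω : {0,…,T−1} → ℝ^q`: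
its `(i,j)` block entry (for `i < k`, `j < T−k+1`) is the vector `ω(i+j) ∈ ℝ^q`. -/
noncomputable def hankelMat {q : ℕ} (T : ℕ) (ω : Fin T → Fin q → ℝ) (k : ℕ) :
    Matrix (Fin k × Fin q) (Fin (T - k + 1)) ℝ := fun r c =>
  if h : (r.1 : ℕ) + (c : ℕ) < T then ω ⟨(r.1 : ℕ) + (c : ℕ), h⟩ r.2 else 0

/-- A signal is Hankel exciting of order `k` if its depth-`k` block Hankel matrix
has full row rank `q·k`. -/
def HankelExciting {q : ℕ} (T : ℕ) (ω : Fin T → Fin q → ℝ) (k : ℕ) : Prop :=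
  (hankelMat T ω k).rank = q * k

/-- The controllability matrix `[B, AB, …, A^{n−1}B]`. -/
noncomputable def ctrbMat {n : ℕ} {ι : Type} [Fintype ι]
    (A : Matrix (Fin n) (Fin n) ℝ) (B : Matrix (Fin n) ι ℝ) :
    Matrix (Fin n) (Fin n × ι) ℝ :=
  Matrix.of fun i p => (A ^ (p.1 : ℕ) * B) i p.2

/-- The pair `(A, B)` is controllable if the controllability matrix has rank `n`. -/
def Controllable {n : ℕ} {ι : Type} [Fintype ι]
    (A : Matrix (Fin n) (Fin n) ℝ) (B : Matrix (Fin n) ι ℝ) : Prop :=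
  (ctrbMat A B).rank = n

/-- The matrix `X_d = [x^d(0), x^d(1), …, x^d(cols−1)]` of stacked states. -/
noncomputable def stateCols {n T : ℕ} (xd : Fin (T + 1) → Fin n → ℝ) (cols : ℕ) :
    Matrix (Fin n) (Fin cols) ℝ := fun i j =>
  if h : (j : ℕ) < T + 1 then xd ⟨(j : ℕ), h⟩ i else 0

open Finset

theorem Matrix.rank_eq_card_iff_forall_vecMul_eq_zero {K m n : Type*} [Field K] [Fintype m]
    [Fintype n] {M : Matrix m n K} :
    M.rank = Fintype.card m ↔ ∀ v, v ᵥ* M = 0 → v = 0 := by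
  have h := injective_iff_map_eq_zero M.vecMulLinear
  rw [coe_vecMulLinear] at h
  rw [← h, vecMul_injective_iff, linearIndependent_iff_card_eq_finrank_span,
    rank_eq_finrank_span_row, Set.finrank, eq_comm]

theorem eq_zero_of_monic_recurrence {R V : Type*} [Semiring R] [AddCommMonoid V]
    [Module R V] {b : ℕ → R} {K M : ℕ} (hb : b K = 1) {e : ℕ → V} (he : ∀ i, M ≤ i → e i = 0)
    (hrec : ∀ m < M, ∑ s ∈ range (K + 1), b s • e (m + (K - s)) = 0) (i : ℕ) : e i = 0 := by
  suffices ∀ d i, M ≤ i + d → e i = 0 from this M i (by omega)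
  intro d
  induction d with
  | zero => exact he
  | succ d ih =>
    intro i hi
    rcases le_or_gt M i with hMi | hiM
    · exact he i hMi
    have hlater : ∀ s ∈ range K, b s • e (i + (K - s)) = 0 := fun s hs ↦ by
      rw [ih _ (by have := mem_range.mp hs; omega), smul_zero]
    simpa [sum_range_succ, sum_eq_zero hlater, hb] using hrec i hiM

def prependRev {V : Type*} (N : ℕ) (w η : ℕ → V) (i : ℕ) : V :=
  if i < N then w (N - 1 - i) else η (i - N)

section LinearSystem

variable {K σ ι : Type*} [CommRing K] [Fintype σ] [Fintype ι]
  {F : Matrix σ σ K} {G : Matrix σ ι K} {u : ℕ → ι → K} {z : ℕ → σ → K}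

-- The counterpart of `HankelExciting` for a signal indexed by `ℕ` and observed on `[0, T)`.
def HankelExcitingSeq (u : ℕ → ι → K) (T k : ℕ) : Prop :=
  ∀ φ : ℕ → ι → K, (∀ j, j + k ≤ T → ∑ m ∈ range k, φ m ⬝ᵥ u (m + j) = 0) →
    ∀ m < k, φ m = 0

theorem sum_dotProduct_add_dotProduct_shift {j : ℕ}
    (hj : z (j + 1) = F *ᵥ z j + G *ᵥ u j) (ψ : σ → K) {φ : ℕ → ι → K} {W : ℕ} (hW : 0 < W)
    (h0 : φ 0 = ψ ᵥ* G) (hφW : φ W = 0) :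
    ∑ m ∈ range W, φ m ⬝ᵥ u (m + j) + (ψ ᵥ* F) ⬝ᵥ z j =
      ∑ m ∈ range W, φ (m + 1) ⬝ᵥ u (m + (j + 1)) + ψ ⬝ᵥ z (j + 1) := by
  obtain ⟨W, rfl⟩ : ∃ W', W = W' + 1 := ⟨W - 1, by omega⟩
  rw [sum_range_succ', sum_range_succ, hφW, zero_dotProduct, add_zero, hj, dotProduct_add,
    dotProduct_mulVec, dotProduct_mulVec, h0, zero_add]
  simp only [add_assoc, add_comm 1 j]
  abel

variable [DecidableEq σ] {T L N : ℕ} {η : ℕ → ι → K} {ζ : σ → K}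

theorem sum_prependRev_dotProduct_add_eq_zero
    (hdyn : ∀ k < T, z (k + 1) = F *ᵥ z k + G *ᵥ u k) (hη : ∀ i, L ≤ i → η i = 0)
    (hrel : ∀ j, j + L ≤ T → ∑ i ∈ range L, η i ⬝ᵥ u (i + j) + ζ ⬝ᵥ z j = 0)
    {s j : ℕ} (hs : s ≤ N) (hj : j + s + L ≤ T) :
    ∑ m ∈ range (L + N),
        prependRev N (fun k ↦ ζ ᵥ* (F ^ k * G)) η (m + (N - s)) ⬝ᵥ u (m + j)
      + (ζ ᵥ* F ^ s) ⬝ᵥ z j = 0 := by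
  induction s generalizing j with
  | zero =>
    simp only [sum_range_add, prependRev, Nat.sub_zero, pow_zero, vecMul_one]
    simp [hη, hrel j (by omega)]
  | succ s ih =>
    rw [pow_succ, ← vecMul_vecMul,
      sum_dotProduct_add_dotProduct_shift (hdyn j (by omega)) _ (by omega) ?_ ?_]
    · convert ih (by omega) (j := j + 1) (by omega) using 4 with m
      congr 1
      omega
    · simp [prependRev, show N - (s + 1) < N by omega,
        show N - 1 - (N - (s + 1)) = s by omega, vecMul_vecMul]
    · rw [prependRev, if_neg (by omega), hη _ (by omega)]

variable [Nontrivial K]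

theorem sum_charpoly_coeff_smul_prependRev_dotProduct_eq_zero
    (hdyn : ∀ k < T, z (k + 1) = F *ᵥ z k + G *ᵥ u k) (hη : ∀ i, L ≤ i → η i = 0)
    (hrel : ∀ j, j + L ≤ T → ∑ i ∈ range L, η i ⬝ᵥ u (i + j) + ζ ⬝ᵥ z j = 0)
    {j : ℕ} (hj : j + (L + Fintype.card σ) ≤ T) :
    ∑ m ∈ range (L + Fintype.card σ),
      (∑ s ∈ range (Fintype.card σ + 1), F.charpoly.coeff s •
        prependRev (Fintype.card σ) (fun k ↦ ζ ᵥ* (F ^ k * G)) η (m + (Fintype.card σ - s)))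
        ⬝ᵥ u (m + j) = 0 := by
  set N := Fintype.card σ
  set e := prependRev N (fun k ↦ ζ ᵥ* (F ^ k * G)) η
  have hCH : ∑ s ∈ range (N + 1), F.charpoly.coeff s • F ^ s = 0 := by
    rw [← Polynomial.aeval_eq_sum_range' (by simp [N]), aeval_self_charpoly]
  have hrel_s : ∀ s ∈ range (N + 1), F.charpoly.coeff s *
      (∑ m ∈ range (L + N), e (m + (N - s)) ⬝ᵥ u (m + j) + (ζ ᵥ* F ^ s) ⬝ᵥ z j) = 0 :=
    fun s hs ↦ by
      rw [sum_prependRev_dotProduct_add_eq_zero hdyn hη hrel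
        (Nat.lt_succ_iff.mp (mem_range.mp hs)) (by have := mem_range.mp hs; omega), mul_zero]
  calc _ = ∑ s ∈ range (N + 1), F.charpoly.coeff s *
          ∑ m ∈ range (L + N), e (m + (N - s)) ⬝ᵥ u (m + j) := by
        simp only [sum_dotProduct, smul_dotProduct, smul_eq_mul, mul_sum]
        exact sum_comm
    _ = ∑ s ∈ range (N + 1), F.charpoly.coeff s *
          (∑ m ∈ range (L + N), e (m + (N - s)) ⬝ᵥ u (m + j) + (ζ ᵥ* F ^ s) ⬝ᵥ z j)
        - (ζ ᵥ* ∑ s ∈ range (N + 1), F.charpoly.coeff s • F ^ s) ⬝ᵥ z j := by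
        simp only [mul_add, sum_add_distrib, vecMul_sum, vecMul_smul, sum_dotProduct,
          smul_dotProduct, smul_eq_mul, add_sub_cancel_right]
    _ = 0 := by rw [hCH, sum_eq_zero hrel_s, vecMul_zero, zero_dotProduct, sub_zero]

theorem hankel_state_left_kernel (hdyn : ∀ k < T, z (k + 1) = F *ᵥ z k + G *ᵥ u k)
    (hexc : HankelExcitingSeq u T (L + Fintype.card σ))
    (hη : ∀ i, L ≤ i → η i = 0)
    (hrel : ∀ j, j + L ≤ T → ∑ i ∈ range L, η i ⬝ᵥ u (i + j) + ζ ⬝ᵥ z j = 0) :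
    (∀ i, η i = 0) ∧ ∀ k < Fintype.card σ, ζ ᵥ* (F ^ k * G) = 0 := by
  set N := Fintype.card σ
  have he : ∀ i, prependRev N (fun k ↦ ζ ᵥ* (F ^ k * G)) η i = 0 :=
    eq_zero_of_monic_recurrence (by simpa using F.charpoly_monic.coeff_natDegree)
      (fun i hi ↦ by rw [prependRev, if_neg (by omega), hη _ (by omega)])
      (hexc _ fun _ hj ↦
        sum_charpoly_coeff_smul_prependRev_dotProduct_eq_zero hdyn hη hrel hj)
  refine ⟨fun i ↦ ?_, fun k hk ↦ ?_⟩
  · simpa [prependRev] using he (i + N)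
  · simpa [prependRev, show N - 1 - k < N by omega, show N - 1 - (N - 1 - k) = k by omega]
      using he (N - 1 - k)

end LinearSystem

def zeroExtend {T : ℕ} {V : Type*} [Zero V] (ω : Fin T → V) (k : ℕ) : V :=
  if h : k < T then ω ⟨k, h⟩ else 0

theorem zeroExtend_of_lt {T : ℕ} {V : Type*} [Zero V] (ω : Fin T → V) {k : ℕ} (h : k < T) :
    zeroExtend ω k = ω ⟨k, h⟩ :=
  dif_pos h

theorem zeroExtend_of_le {T : ℕ} {V : Type*} [Zero V] (ω : Fin T → V) {k : ℕ} (h : T ≤ k) :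
    zeroExtend ω k = 0 :=
  dif_neg (by omega)

section Homogenization

variable {K m ι : Type*} [CommRing K] [Fintype m]

def homogenizedA (A : Matrix m m K) (b : m → K) : Matrix (m ⊕ Unit) (m ⊕ Unit) K :=
  fromBlocks A (replicateCol Unit b) 0 1

def homogenizedB (B : Matrix m ι K) : Matrix (m ⊕ Unit) ι K :=
  fromRows B 0

theorem homogenizedA_mulVec_add_homogenizedB_mulVec [Fintype ι] (A : Matrix m m K)
    (B : Matrix m ι K) (b x : m → K) (v : ι → K) :
    homogenizedA A b *ᵥ Sum.elim x 1 + homogenizedB B *ᵥ v =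
      Sum.elim (A *ᵥ x + B *ᵥ v + b) 1 := by
  ext (i | i)
  · simp [homogenizedA, homogenizedB, fromBlocks_mulVec, mulVec, dotProduct]
    ring
  · simp [homogenizedA, homogenizedB, fromBlocks_mulVec]

theorem homogenizedA_pow_mul_homogenizedB [DecidableEq m] (A : Matrix m m K)
    (B : Matrix m ι K) (b : m → K) (k : ℕ) :
    homogenizedA A b ^ k * homogenizedB B = fromRows (A ^ k * B) 0 := by
  induction k with
  | zero => simp [homogenizedB]
  | succ k ih =>
    rw [pow_succ', Matrix.mul_assoc, ih, homogenizedA, fromBlocks_mul_fromRows]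
    simp [pow_succ', Matrix.mul_assoc]

theorem sumElim_zeroExtend_succ {K m ι : Type*} [CommRing K] [Fintype m] [Fintype ι] {T : ℕ}
    {A : Matrix m m K} {B : Matrix m ι K} {b : m → K} {ud : Fin T → ι → K}
    {xd : Fin (T + 1) → m → K}
    (hdyn : ∀ k : Fin T, xd k.succ = A *ᵥ xd k.castSucc + B *ᵥ ud k + b)
    {k : ℕ} (hk : k < T) :
    Sum.elim (zeroExtend xd (k + 1)) (1 : Unit → K) =
      homogenizedA A b *ᵥ Sum.elim (zeroExtend xd k) 1 + homogenizedB B *ᵥ zeroExtend ud k := by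
  rw [zeroExtend_of_lt xd (by omega : k + 1 < T + 1),
    zeroExtend_of_lt xd (by omega : k < T + 1), zeroExtend_of_lt ud hk,
    homogenizedA_mulVec_add_homogenizedB_mulVec]
  exact congrArg (Sum.elim · _) (hdyn ⟨k, hk⟩)

end Homogenization

section Hankel

variable {q T k : ℕ} {ω : Fin T → Fin q → ℝ}

theorem vecMul_hankelMat_apply (φ : ℕ → Fin q → ℝ) (c : Fin (T - k + 1)) :
    ((fun r : Fin k × Fin q ↦ φ r.1 r.2) ᵥ* hankelMat T ω k) c =
      ∑ m ∈ range k, φ m ⬝ᵥ zeroExtend ω (m + c) := by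
  rw [← Fin.sum_univ_eq_sum_range (fun m ↦ φ m ⬝ᵥ zeroExtend ω (m + c)), vecMul, dotProduct,
    Fintype.sum_prod_type]
  refine sum_congr rfl fun m _ ↦ sum_congr rfl fun p _ ↦ ?_
  simp only [hankelMat, zeroExtend]
  split_ifs <;> simp

theorem HankelExciting.eq_zero_of_forall_le_sub (h : HankelExciting T ω k)
    {φ : ℕ → Fin q → ℝ} (hφ : ∀ j ≤ T - k, ∑ m ∈ range k, φ m ⬝ᵥ zeroExtend ω (m + j) = 0)
    {m : ℕ} (hm : m < k) : φ m = 0 := by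
  have hrank : (hankelMat T ω k).rank = Fintype.card (Fin k × Fin q) := by
    rw [h, Fintype.card_prod, Fintype.card_fin, Fintype.card_fin, mul_comm]
  have hv := rank_eq_card_iff_forall_vecMul_eq_zero.mp hrank (fun r ↦ φ r.1 r.2) <| by
    ext c
    rw [vecMul_hankelMat_apply, Pi.zero_apply]
    exact hφ c (Nat.lt_succ_iff.mp c.isLt)
  ext p
  exact congrFun hv (⟨m, hm⟩, p)

-- The rows of `hankelMat T ω k` with block index `≥ T` are zero.
theorem HankelExciting.le (h : HankelExciting T ω k) (hq : 0 < q) : k ≤ T := by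
  by_contra! hTk
  have hφ : ∀ j ≤ T - k, ∑ m ∈ range k,
      (if T ≤ m then (1 : Fin q → ℝ) else 0) ⬝ᵥ zeroExtend ω (m + j) = 0 := by
    refine fun j _ ↦ sum_eq_zero fun m _ ↦ ?_
    by_cases hm : T ≤ m
    · simp [zeroExtend, show ¬ m + j < T by omega]
    · simp [hm]
  simpa using congrFun (h.eq_zero_of_forall_le_sub hφ hTk) ⟨0, hq⟩

theorem HankelExciting.hankelExcitingSeq_zeroExtend (h : HankelExciting T ω k) :
    HankelExcitingSeq (zeroExtend ω) T k := by
  intro φ hφ m hm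
  rcases Nat.eq_zero_or_pos q with rfl | hq
  · exact Subsingleton.elim _ _
  have hkT := h.le hq
  exact h.eq_zero_of_forall_le_sub (fun j hj ↦ hφ j (by omega)) hm

end Hankel

theorem vecMul_stateCols_apply {n T cols : ℕ} (xd : Fin (T + 1) → Fin n → ℝ) (ξ : Fin n → ℝ)
    (j : Fin cols) : (ξ ᵥ* stateCols xd cols) j = ξ ⬝ᵥ zeroExtend xd j := by
  simp only [vecMul, stateCols, zeroExtend, dotProduct]
  split_ifs <;> simp

theorem sumElim_vecMul_stacked_apply {n q T L : ℕ} (ud : Fin T → Fin q → ℝ)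
    (xd : Fin (T + 1) → Fin n → ℝ) (v : Fin L × Fin q → ℝ) (ξ : Fin n → ℝ) (c : ℝ)
    (j : Fin (T - L + 1)) :
    (Sum.elim (Sum.elim v ξ) (fun _ : Unit ↦ c) ᵥ*
      fromRows (fromRows (hankelMat T ud L) (stateCols xd (T - L + 1))) (of fun _ _ ↦ 1)) j =
      ∑ i ∈ range L, zeroExtend (Function.curry v) i ⬝ᵥ zeroExtend ud (i + j)
        + Sum.elim ξ (fun _ : Unit ↦ c) ⬝ᵥ Sum.elim (zeroExtend xd j) 1 := by
  have hv : v = fun r ↦ zeroExtend (Function.curry v) r.1 r.2 := by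
    ext r
    simp [zeroExtend_of_lt _ r.1.isLt]
  rw [sumElim_vecMul_fromRows, sumElim_vecMul_fromRows, Pi.add_apply, Pi.add_apply]
  nth_rw 1 [hv]
  rw [vecMul_hankelMat_apply, vecMul_stateCols_apply]
  simp [vecMul, dotProduct, add_assoc]

theorem Controllable.eq_zero_of_forall_vecMul_pow_mul_eq_zero {n : ℕ} {ι : Type} [Fintype ι]
    {A : Matrix (Fin n) (Fin n) ℝ} {B : Matrix (Fin n) ι ℝ} (h : Controllable A B)
    {ξ : Fin n → ℝ} (hξ : ∀ k < n, ξ ᵥ* (A ^ k * B) = 0) : ξ = 0 :=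
  rank_eq_card_iff_forall_vecMul_eq_zero.mp (h.trans (Fintype.card_fin n).symm) ξ <| by
    ext ⟨k, p⟩
    exact congrFun (hξ k k.isLt) p

theorem stmt9_general {n q T : ℕ}
    (A : Matrix (Fin n) (Fin n) ℝ) (Bh : Matrix (Fin n) (Fin q) ℝ) (Lb : Fin n → ℝ)
    (hctrb : Controllable A Bh)
    (ud : Fin T → Fin q → ℝ) (xd : Fin (T + 1) → Fin n → ℝ)
    (hdyn : ∀ k : Fin T, xd k.succ = A *ᵥ xd k.castSucc + Bh *ᵥ ud k + Lb)
    (L : ℕ)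
    (hexc : HankelExciting T ud (L + n + 1)) :
    (Matrix.fromRows
      (Matrix.fromRows (hankelMat T ud L) (stateCols xd (T - L + 1)))
      (Matrix.of fun (_ : Unit) (_ : Fin (T - L + 1)) => (1 : ℝ))).rank
      = q * L + n + 1 := by
  have hcard : q * L + n + 1 = Fintype.card (((Fin L × Fin q) ⊕ Fin n) ⊕ Unit) := by
    simp [mul_comm]
  rw [hcard, rank_eq_card_iff_forall_vecMul_eq_zero]
  intro g hg
  obtain ⟨v, ξ, c, rfl⟩ : ∃ v ξ c, g = Sum.elim (Sum.elim v ξ) fun _ ↦ c :=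
    ⟨_, _, g (Sum.inr ()), by ext ((_ | _) | _) <;> rfl⟩
  have hcol j := (sumElim_vecMul_stacked_apply ud xd v ξ c j).symm.trans (congrFun hg j)
  have hN : Fintype.card (Fin n ⊕ Unit) = n + 1 := by simp
  obtain ⟨hη, hmarkov⟩ := hankel_state_left_kernel (F := homogenizedA A Lb)
    (G := homogenizedB Bh) (z := fun k ↦ Sum.elim (zeroExtend xd k) 1)
    (fun k hk ↦ sumElim_zeroExtend_succ hdyn hk)
    (by rw [hN]; exact hexc.hankelExcitingSeq_zeroExtend)
    (fun i hi ↦ zeroExtend_of_le _ hi) (fun j hj ↦ hcol ⟨j, by omega⟩)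
  have hξ : ξ = 0 := hctrb.eq_zero_of_forall_vecMul_pow_mul_eq_zero fun k hk ↦ by
    simpa [homogenizedA_pow_mul_homogenizedB, sumElim_vecMul_fromRows]
      using hmarkov k (by rw [hN]; omega)
  have hc : c = 0 := by simpa [hη, hξ] using hcol 0
  ext ((⟨i, p⟩ | r) | _)
  · simpa [zeroExtend_of_lt] using congrFun (hη i) p
  · simp [hξ]
  · simp [hc]

/-- full row rank of the stacked Hankel/state/ones matrix.
If `(A, B̂)` is controllable, `(û^d, x^d)` satisfies the affine dynamics
`x(k+1) = A x(k) + B̂ û(k) + L̄`, `1 ≤ L ≤ T`, and `û^d` is Hankel exciting of order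
`L + n + 1`, then the matrix obtained by stacking `𝓗_L(û^d)`,
`X_d = [x^d(0), …, x^d(T−L)]` and the all-ones row has full row rank `qL + n + 1`. -/
theorem stmt9 {n q T : ℕ}
    (A : Matrix (Fin n) (Fin n) ℝ) (Bh : Matrix (Fin n) (Fin q) ℝ) (Lb : Fin n → ℝ)
    (hctrb : Controllable A Bh)
    (ud : Fin T → Fin q → ℝ) (xd : Fin (T + 1) → Fin n → ℝ)
    (hdyn : ∀ k : Fin T, xd k.succ = A *ᵥ xd k.castSucc + Bh *ᵥ ud k + Lb)
    (L : ℕ) (hL : 1 ≤ L) (hLT : L ≤ T)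
    (hexc : HankelExciting T ud (L + n + 1)) :
    (Matrix.fromRows
      (Matrix.fromRows (hankelMat T ud L) (stateCols xd (T - L + 1)))
      (Matrix.of fun (_ : Unit) (_ : Fin (T - L + 1)) => (1 : ℝ))).rank
      = q * L + n + 1 :=
  stmt9_general A Bh Lb hctrb ud xd hdyn L hexc
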